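/- arXiv:2312.14086 — 3 statements merged into one kernel-verified Lean document; each statement's English description precedes it below -/
import Mathlib

section
/- Let 𝒳 and Θ be complete separable metric spaces equipped with their Borel σ-algebras, let Π be a Borel probability measure on Θ (the prior), and let θ ↦ P_θ be a family of Borel probability measures on 𝒳 such that θ ↦ P_θ(A) is measurable for every Borel set A ⊆ 𝒳, and the map θ ↦ P_θ is one-to-one. Consider the Bayesian joint model in which θ ∼ Π and, given θ, the observations X₁, X₂, … are i.i.d. with law P_θ (the joint law on Θ × 𝒳^ℕ is Π composed with the kernel of i.i.d. P_θ sequences). Then there exists a Borel set Θ* ⊆ Θ with Π(Θ*) = 1 such that for every θ₀ ∈ Θ*, if X₁, X₂, … are i.i.d. with law P_{θ₀}, then for every open neighborhood B of θ₀ the posterior distribution satisfies Π(θ ∈ B | X₁,…,X_n) → 1 as n → ∞, almost surely with respect to the infinite product measure P_{θ₀}^∞, where Π(· | X₁,…,X_n) denotes a regular conditional distribution of θ given the first n observations under the joint law. -/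
open MeasureTheory Filter Set
open ProbabilityTheory
open scoped ENNReal Topology

/-!
STATEMENT 0 (Doob's consistency theorem): let 𝒳 and Θ be complete separable metric
spaces with their Borel σ-algebras, Π a prior (Borel probability measure) on Θ, and
θ ↦ P_θ an identifiable, measurably parametrized family of Borel probability measures
on 𝒳.  In the Bayesian joint model θ ∼ Π and X₁, X₂, … | θ i.i.d. ∼ P_θ, there exists a
Borel set Θ* ⊆ Θ with Π(Θ*) = 1 such that for every θ₀ ∈ Θ*, if X₁, X₂, … are i.i.d.
with law P_{θ₀}, the posterior mass of every open neighborhood B of θ₀ converges to 1,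
P_{θ₀}^∞-almost surely.

Here the joint law J of (θ, (X₁,X₂,…)) is characterized on measurable rectangles with
cylinder sets; P_{θ₀}^∞ = Pinf θ₀ is the infinite product measure, characterized on
cylinders; and the posterior Π(· | X₁,…,X_n) = post n is a regular conditional
distribution of θ given the first n observations: a probability-measure-valued map,
measurable with respect to the σ-algebra generated by the first n coordinates, that
disintegrates J over events depending on the first n coordinates.
-/

private def doobCyl (𝒳 : Type*) [MeasurableSpace 𝒳] : Set (Set (ℕ → 𝒳)) :=
  {S | ∃ (n : ℕ) (B : Fin n → Set 𝒳), (∀ i, MeasurableSet (B i)) ∧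
    S = {x : ℕ → 𝒳 | ∀ i : Fin n, x (i : ℕ) ∈ B i}}

private lemma doobCyl_isPiSystem (𝒳 : Type*) [MeasurableSpace 𝒳] : IsPiSystem (doobCyl 𝒳) := by
  rintro S₁ ⟨n, B, hB, rfl⟩ S₂ ⟨m, C, hC, rfl⟩ -
  refine ⟨max n m,
    fun i => (if h : (i : ℕ) < n then B ⟨i, h⟩ else univ) ∩
      (if h : (i : ℕ) < m then C ⟨i, h⟩ else univ),
    fun i => MeasurableSet.inter (by split_ifs with h; exacts [hB _, .univ])
      (by split_ifs with h; exacts [hC _, .univ]), ?_⟩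
  ext x
  simp only [mem_inter_iff, mem_setOf_eq]
  constructor
  · rintro ⟨h1, h2⟩ i
    refine ⟨?_, ?_⟩
    · split_ifs with h
      · exact h1 ⟨(i : ℕ), h⟩
      · trivial
    · split_ifs with h
      · exact h2 ⟨(i : ℕ), h⟩
      · trivial
  · intro h
    constructor
    · intro i
      have h1 := (h ⟨(i : ℕ), lt_of_lt_of_le i.2 (le_max_left n m)⟩).1
      rw [dif_pos i.2] at h1
      exact h1
    · intro i
      have h2 := (h ⟨(i : ℕ), lt_of_lt_of_le i.2 (le_max_right n m)⟩).2
      rw [dif_pos i.2] at h2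
      exact h2

private lemma doobCyl_gen (𝒳 : Type*) [MeasurableSpace 𝒳] :
    (inferInstance : MeasurableSpace (ℕ → 𝒳)) = .generateFrom (doobCyl 𝒳) := by
  refine le_antisymm ?_ (MeasurableSpace.generateFrom_le ?_)
  · show (⨆ i : ℕ, MeasurableSpace.comap (fun x : ℕ → 𝒳 => x i) inferInstance)
      ≤ .generateFrom (doobCyl 𝒳)
    refine iSup_le fun i => measurable_iff_comap_le.mp fun s hs => ?_
    have hset : (fun x : ℕ → 𝒳 => x i) ⁻¹' s
        = {x : ℕ → 𝒳 | ∀ j : Fin (i + 1),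
            x (j : ℕ) ∈ (fun j : Fin (i + 1) => if (j : ℕ) = i then s else univ) j} := by
      ext x
      simp only [mem_preimage, mem_setOf_eq]
      constructor
      · intro h j
        split_ifs with hj
        · rwa [hj]
        · trivial
      · intro h
        have := h ⟨i, Nat.lt_succ_self i⟩
        simpa using this
    rw [hset]
    exact MeasurableSpace.measurableSet_generateFrom
      ⟨i + 1, _, fun j => by split_ifs; exacts [hs, .univ], rfl⟩
  · rintro S ⟨n, B, hB, rfl⟩
    have : {x : ℕ → 𝒳 | ∀ i : Fin n, x (i : ℕ) ∈ B i}
        = ⋂ i : Fin n, (fun x : ℕ → 𝒳 => x (i : ℕ)) ⁻¹' B i := by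
      ext x; simp
    rw [this]
    exact MeasurableSet.iInter fun i => (measurable_pi_apply _) (hB i)

private lemma doob_rect {𝒳 Θ : Type*} [MeasurableSpace 𝒳] [MeasurableSpace Θ]
    (prior : Measure Θ) [IsProbabilityMeasure prior]
    (P : Θ → Measure 𝒳)
    (hPmeas : ∀ A : Set 𝒳, MeasurableSet A → Measurable fun θ => P θ A)
    (J : Measure (Θ × (ℕ → 𝒳))) [IsProbabilityMeasure J]
    (hJ : ∀ A : Set Θ, MeasurableSet A → ∀ (n : ℕ) (B : Fin n → Set 𝒳),
      (∀ i, MeasurableSet (B i)) →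
      J (A ×ˢ {x : ℕ → 𝒳 | ∀ i : Fin n, x (i : ℕ) ∈ B i})
        = ∫⁻ θ in A, ∏ i : Fin n, P θ (B i) ∂prior)
    (Pinf : Θ → Measure (ℕ → 𝒳)) (hPinfprob : ∀ θ, IsProbabilityMeasure (Pinf θ))
    (hPinf : ∀ (θ : Θ) (n : ℕ) (B : Fin n → Set 𝒳), (∀ i, MeasurableSet (B i)) →
      Pinf θ {x : ℕ → 𝒳 | ∀ i : Fin n, x (i : ℕ) ∈ B i} = ∏ i : Fin n, P θ (B i)) :
    ∀ ⦃S : Set (ℕ → 𝒳)⦄, MeasurableSet S →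
      Measurable (fun θ => Pinf θ S) ∧ ∀ A : Set Θ, MeasurableSet A →
        J (A ×ˢ S) = ∫⁻ θ in A, Pinf θ S ∂prior := by
  have huniv : ∀ A : Set Θ, MeasurableSet A → J (A ×ˢ (univ : Set (ℕ → 𝒳))) = prior A := by
    intro A hA
    have h0 := hJ A hA 0 (fun _ => univ) (fun _ => .univ)
    simpa using h0
  refine MeasurableSpace.induction_on_inter (doobCyl_gen 𝒳) (doobCyl_isPiSystem 𝒳) ?_ ?_ ?_ ?_
  · exact ⟨by simp, fun A hA => by simp⟩
  · rintro t ⟨n, B, hB, rfl⟩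
    constructor
    · have h1 : (fun θ => Pinf θ {x : ℕ → 𝒳 | ∀ i : Fin n, x (i : ℕ) ∈ B i})
          = fun θ => ∏ i : Fin n, P θ (B i) := funext fun θ => hPinf θ n B hB
      rw [h1]
      exact Finset.measurable_prod _ fun i _ => hPmeas _ (hB i)
    · intro A hA
      rw [hJ A hA n B hB]
      exact setLIntegral_congr_fun hA (fun θ _ => (hPinf θ n B hB).symm)
  · rintro t ht ⟨hmeas, hrect⟩
    constructor
    · have h1 : (fun θ => Pinf θ tᶜ) = fun θ => 1 - Pinf θ t := funext fun θ => by
        haveI := hPinfprob θ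
        rw [measure_compl ht (measure_ne_top _ _), measure_univ]
      rw [h1]
      exact measurable_const.sub hmeas
    · intro A hA
      have hsplit : A ×ˢ tᶜ = (A ×ˢ (univ : Set (ℕ → 𝒳))) \ (A ×ˢ t) := by
        ext ⟨a, b⟩
        simp only [mem_prod, mem_diff, mem_compl_iff, mem_univ, and_true]
        tauto
      have hfin : ∫⁻ θ in A, Pinf θ t ∂prior ≠ ∞ := by
        have hle : ∫⁻ θ in A, Pinf θ t ∂prior ≤ ∫⁻ _ in A, (1 : ℝ≥0∞) ∂prior :=
          lintegral_mono (g := fun _ => (1 : ℝ≥0∞)) fun θ => by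
            haveI := hPinfprob θ; exact prob_le_one
        rw [setLIntegral_one] at hle
        exact ne_of_lt (lt_of_le_of_lt hle (lt_of_le_of_lt prob_le_one ENNReal.one_lt_top))
      calc J (A ×ˢ tᶜ) = J (A ×ˢ (univ : Set (ℕ → 𝒳))) - J (A ×ˢ t) := by
            rw [hsplit]
            exact measure_diff (prod_mono subset_rfl (subset_univ t))
              (hA.prod ht).nullMeasurableSet (measure_ne_top J _)
        _ = ∫⁻ θ in A, 1 ∂prior - ∫⁻ θ in A, Pinf θ t ∂prior := by
            rw [huniv A hA, hrect A hA, setLIntegral_one]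
        _ = ∫⁻ θ in A, (1 - Pinf θ t) ∂prior := by
            refine (lintegral_sub hmeas hfin (ae_of_all _ fun θ => ?_)).symm
            haveI := hPinfprob θ; exact prob_le_one
        _ = ∫⁻ θ in A, Pinf θ tᶜ ∂prior := by
            refine setLIntegral_congr_fun hA (fun θ _ => ?_)
            haveI := hPinfprob θ
            rw [measure_compl ht (measure_ne_top _ _), measure_univ]
  · intro f hdisj hmeasf hC
    constructor
    · have h1 : (fun θ => Pinf θ (⋃ i, f i)) = fun θ => ∑' i, Pinf θ (f i) :=
        funext fun θ => measure_iUnion hdisj hmeasf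
      rw [h1]
      exact Measurable.ennreal_tsum fun i => (hC i).1
    · intro A hA
      rw [prod_iUnion,
        measure_iUnion (fun i j hij => disjoint_prod.mpr (Or.inr (hdisj hij)))
          (fun i => hA.prod (hmeasf i))]
      calc ∑' i, J (A ×ˢ f i) = ∑' i, ∫⁻ θ in A, Pinf θ (f i) ∂prior :=
            tsum_congr fun i => (hC i).2 A hA
        _ = ∫⁻ θ in A, ∑' i, Pinf θ (f i) ∂prior :=
            (lintegral_tsum fun i => ((hC i).1).aemeasurable).symm
        _ = ∫⁻ θ in A, Pinf θ (⋃ i, f i) ∂prior :=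
            setLIntegral_congr_fun hA
              (fun θ _ => (measure_iUnion hdisj hmeasf).symm)

section
variable {𝒳 Θ : Type*} [MeasurableSpace 𝒳] [MeasurableSpace Θ]
  {P : Θ → Measure 𝒳} {Pinf : Θ → Measure (ℕ → 𝒳)}

private lemma doob_eval_preimage (hPprob : ∀ θ, IsProbabilityMeasure (P θ))
    (hPinf : ∀ (θ : Θ) (n : ℕ) (B : Fin n → Set 𝒳), (∀ i, MeasurableSet (B i)) →
      Pinf θ {x : ℕ → 𝒳 | ∀ i : Fin n, x (i : ℕ) ∈ B i} = ∏ i : Fin n, P θ (B i))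
    (θ : Θ) (i : ℕ) (s : Set 𝒳) (hs : MeasurableSet s) :
    Pinf θ ((fun x : ℕ → 𝒳 => x i) ⁻¹' s) = P θ s := by
  haveI := hPprob θ
  have hB : ∀ m : Fin (i + 1), MeasurableSet (if (m : ℕ) = i then s else univ) := by
    intro m; split_ifs; exacts [hs, .univ]
  have hset : (fun x : ℕ → 𝒳 => x i) ⁻¹' s
      = {x : ℕ → 𝒳 | ∀ m : Fin (i + 1), x (m : ℕ) ∈ (if (m : ℕ) = i then s else univ)} := by
    ext x
    simp only [mem_preimage, mem_setOf_eq]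
    constructor
    · intro h m; split_ifs with hm
      · rwa [hm]
      · trivial
    · intro h
      have := h ⟨i, Nat.lt_succ_self i⟩
      simpa using this
  rw [hset, hPinf θ (i + 1) _ hB]
  rw [Finset.prod_eq_single (⟨i, Nat.lt_succ_self i⟩ : Fin (i + 1))]
  · simp
  · intro b _ hb
    rw [if_neg (fun h => hb (Fin.ext h)), measure_univ]
  · intro h; exact absurd (Finset.mem_univ _) h

private lemma doob_eval_pair (hPprob : ∀ θ, IsProbabilityMeasure (P θ))
    (hPinf : ∀ (θ : Θ) (n : ℕ) (B : Fin n → Set 𝒳), (∀ i, MeasurableSet (B i)) →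
      Pinf θ {x : ℕ → 𝒳 | ∀ i : Fin n, x (i : ℕ) ∈ B i} = ∏ i : Fin n, P θ (B i))
    (θ : Θ) (i j : ℕ) (hij : i ≠ j) (s t : Set 𝒳)
    (hs : MeasurableSet s) (ht : MeasurableSet t) :
    Pinf θ ((fun x : ℕ → 𝒳 => x i) ⁻¹' s ∩ (fun x : ℕ → 𝒳 => x j) ⁻¹' t)
      = P θ s * P θ t := by
  classical
  haveI := hPprob θ
  set N := max i j + 1 with hN
  have hiN : i < N := Nat.lt_succ_of_le (le_max_left i j)
  have hjN : j < N := Nat.lt_succ_of_le (le_max_right i j)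
  set B : Fin N → Set 𝒳 := fun m => if (m : ℕ) = i then s else if (m : ℕ) = j then t else univ
    with hBdef
  have hB : ∀ m, MeasurableSet (B m) := by
    intro m; simp only [hBdef]; split_ifs; exacts [hs, ht, .univ]
  have hset : (fun x : ℕ → 𝒳 => x i) ⁻¹' s ∩ (fun x : ℕ → 𝒳 => x j) ⁻¹' t
      = {x : ℕ → 𝒳 | ∀ m : Fin N, x (m : ℕ) ∈ B m} := by
    ext x
    simp only [mem_inter_iff, mem_preimage, mem_setOf_eq]
    constructor
    · rintro ⟨h1, h2⟩ m
      simp only [hBdef]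
      split_ifs with hm1 hm2
      · rwa [hm1]
      · rwa [hm2]
      · trivial
    · intro h
      constructor
      · have := h ⟨i, hiN⟩
        simpa [hBdef] using this
      · have := h ⟨j, hjN⟩
        simpa [hBdef, hij.symm] using this
  rw [hset, hPinf θ N B hB]
  have e1 : Fin N := ⟨i, hiN⟩
  have hpair : (Finset.univ : Finset (Fin N)) ⊇ {(⟨i, hiN⟩ : Fin N), ⟨j, hjN⟩} :=
    Finset.subset_univ _
  rw [← Finset.prod_subset hpair ?h1]
  · rw [Finset.prod_pair (by simp [Fin.ext_iff, hij])]
    have hBi : B ⟨i, hiN⟩ = s := by simp [hBdef]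
    have hBj : B ⟨j, hjN⟩ = t := by simp [hBdef, hij.symm]
    rw [hBi, hBj]
  · intro b _ hb
    simp only [Finset.mem_insert, Finset.mem_singleton, not_or] at hb
    have h1 : (b : ℕ) ≠ i := fun h => hb.1 (Fin.ext h)
    have h2 : (b : ℕ) ≠ j := fun h => hb.2 (Fin.ext h)
    simp only [hBdef, if_neg h1, if_neg h2, measure_univ]

end

private lemma doob_T_exists {𝒳 Θ : Type*}
    [MetricSpace 𝒳] [TopologicalSpace.SeparableSpace 𝒳]
    [MeasurableSpace 𝒳] [BorelSpace 𝒳]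
    [MetricSpace Θ] [CompleteSpace Θ] [TopologicalSpace.SeparableSpace Θ]
    [MeasurableSpace Θ] [BorelSpace Θ] [Nonempty Θ]
    (P : Θ → Measure 𝒳) (hPprob : ∀ θ, IsProbabilityMeasure (P θ))
    (hPmeas : ∀ A : Set 𝒳, MeasurableSet A → Measurable fun θ => P θ A)
    (hPinj : Function.Injective P)
    (Pinf : Θ → Measure (ℕ → 𝒳)) (hPinfprob : ∀ θ, IsProbabilityMeasure (Pinf θ))
    (hPinf : ∀ (θ : Θ) (n : ℕ) (B : Fin n → Set 𝒳), (∀ i, MeasurableSet (B i)) →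
      Pinf θ {x : ℕ → 𝒳 | ∀ i : Fin n, x (i : ℕ) ∈ B i} = ∏ i : Fin n, P θ (B i)) :
    ∃ T : (ℕ → 𝒳) → Θ, Measurable T ∧ ∀ θ : Θ, ∀ᵐ x ∂(Pinf θ), T x = θ := by
  classical
  haveI : SecondCountableTopology 𝒳 := UniformSpace.secondCountable_of_separable 𝒳
  haveI : SecondCountableTopology Θ := UniformSpace.secondCountable_of_separable Θ
  -- a countable generating π-system for 𝒳
  set cgs : Set (Set 𝒳) := MeasurableSpace.countableGeneratingSet 𝒳 with hcgs
  set G : Set (Set 𝒳) :=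
    {t | ∃ F : Set (Set 𝒳), F ⊆ cgs ∧ F.Finite ∧ F.Nonempty ∧ t = ⋂₀ F} with hGdef
  have hGcount : G.Countable := by
    have hsub : G ⊆ sInter '' {F : Set (Set 𝒳) | F.Finite ∧ F ⊆ cgs} := by
      rintro t ⟨F, hF1, hF2, -, rfl⟩
      exact ⟨F, ⟨hF2, hF1⟩, rfl⟩
    exact (((countable_setOf_finite_subset
      (MeasurableSpace.countable_countableGeneratingSet)).image _)).mono hsub
  have hGne : G.Nonempty :=
    ⟨∅, {∅}, singleton_subset_iff.mpr MeasurableSpace.empty_mem_countableGeneratingSet,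
      finite_singleton _, singleton_nonempty _, (sInter_singleton ∅).symm⟩
  have hGmeas : ∀ t ∈ G, MeasurableSet t := by
    rintro t ⟨F, hFsub, hFfin, -, rfl⟩
    exact MeasurableSet.sInter hFfin.countable
      (fun s hs => MeasurableSpace.measurableSet_countableGeneratingSet (hFsub hs))
  have hGpi : IsPiSystem G := by
    rintro t ⟨F, hF1, hF2, hF3, rfl⟩ u ⟨F', hF1', hF2', hF3', rfl⟩ -
    exact ⟨F ∪ F', union_subset hF1 hF1', hF2.union hF2',
      hF3.mono subset_union_left, (sInter_union F F').symm⟩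
  have hGgen : (inferInstance : MeasurableSpace 𝒳) = .generateFrom G := by
    refine le_antisymm ?_ (MeasurableSpace.generateFrom_le hGmeas)
    conv_lhs => rw [← MeasurableSpace.generateFrom_countableGeneratingSet (α := 𝒳)]
    refine MeasurableSpace.generateFrom_le fun s hs =>
      MeasurableSpace.measurableSet_generateFrom
        ⟨{s}, singleton_subset_iff.mpr hs, finite_singleton _, singleton_nonempty _,
          (sInter_singleton s).symm⟩
  obtain ⟨A, hAenum⟩ := hGcount.exists_eq_range hGne
  have hAmem : ∀ k, A k ∈ G := fun k => hAenum ▸ mem_range_self k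
  have hAmeas : ∀ k, MeasurableSet (A k) := fun k => hGmeas _ (hAmem k)
  -- the injective measurable parametrization by the values on the `A k`
  set Φ : Θ → ℕ → ℝ := fun θ k => (P θ (A k)).toReal with hΦdef
  have hΦmeas : Measurable Φ :=
    measurable_pi_lambda _ fun k => (hPmeas _ (hAmeas k)).ennreal_toReal
  have hΦinj : Function.Injective Φ := by
    intro θ θ' h
    haveI := hPprob θ; haveI := hPprob θ'
    refine hPinj (ext_of_generate_finite G hGgen hGpi (fun t htG => ?_) (by simp))
    obtain ⟨k, rfl⟩ : ∃ k, A k = t := by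
      have : t ∈ range A := hAenum ▸ htG
      exact this
    exact (ENNReal.toReal_eq_toReal_iff' (measure_ne_top _ _) (measure_ne_top _ _)).mp
      (congrFun h k)
  have hΦemb : MeasurableEmbedding Φ := hΦmeas.measurableEmbedding hΦinj
  obtain ⟨r, hrmeas, hr⟩ :=
    hΦemb.exists_measurable_extend measurable_id (fun _ => ‹Nonempty Θ›)
  -- the limiting relative frequencies
  set L : (ℕ → 𝒳) → ℕ → ℝ := fun x k =>
    (Filter.limsup (fun n : ℕ =>
      (∑ i ∈ Finset.range n, (A k).indicator (fun _ => (1 : ℝ≥0∞)) (x i)) / (n : ℝ≥0∞))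
      atTop).toReal with hLdef
  have hLmeas : Measurable L := by
    refine measurable_pi_lambda _ fun k => Measurable.ennreal_toReal ?_
    refine Measurable.limsup fun n => ?_
    exact (Finset.measurable_sum _ fun i _ =>
      (measurable_const.indicator (hAmeas k)).comp (measurable_pi_apply i)).div_const _
  refine ⟨fun x => r (L x), hrmeas.comp hLmeas, fun θ => ?_⟩
  haveI := hPinfprob θ; haveI := hPprob θ
  have hk : ∀ k, ∀ᵐ x ∂(Pinf θ), L x k = Φ θ k := by
    intro k
    set Xr : ℕ → (ℕ → 𝒳) → ℝ := fun i x => (A k).indicator (fun _ => (1 : ℝ)) (x i)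
      with hXrdef
    have hXr : ∀ i : ℕ, Xr i = fun x : ℕ → 𝒳 =>
        ((fun x : ℕ → 𝒳 => x i) ⁻¹' (A k)).indicator (fun _ => (1 : ℝ)) x := by
      intro i; funext x
      by_cases hmem : x i ∈ A k <;>
        simp [hXrdef, Set.indicator_apply, mem_preimage, hmem]
    have hint : Integrable (Xr 0) (Pinf θ) := by
      rw [hXr 0]
      exact (integrable_const (1 : ℝ)).indicator ((measurable_pi_apply 0) (hAmeas k))
    have hindep : Pairwise (Function.onFun (fun f g => IndepFun f g (Pinf θ)) Xr) := by
      intro i j hij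
      have heval : IndepFun (fun x : ℕ → 𝒳 => x i) (fun x : ℕ → 𝒳 => x j) (Pinf θ) := by
        rw [indepFun_iff_measure_inter_preimage_eq_mul]
        intro s t hs ht
        rw [doob_eval_pair hPprob hPinf θ i j hij s t hs ht,
          doob_eval_preimage hPprob hPinf θ i s hs,
          doob_eval_preimage hPprob hPinf θ j t ht]
      exact heval.comp (measurable_const.indicator (hAmeas k))
        (measurable_const.indicator (hAmeas k))
    have hident : ∀ i, IdentDistrib (Xr i) (Xr 0) (Pinf θ) (Pinf θ) := by
      intro i
      have heval : IdentDistrib (fun x : ℕ → 𝒳 => x i)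
          (fun x : ℕ → 𝒳 => x 0) (Pinf θ) (Pinf θ) :=
        ⟨(measurable_pi_apply i).aemeasurable, (measurable_pi_apply 0).aemeasurable, by
          refine Measure.ext fun s hs => ?_
          rw [Measure.map_apply (measurable_pi_apply i) hs,
            Measure.map_apply (measurable_pi_apply 0) hs,
            doob_eval_preimage hPprob hPinf θ i s hs,
            doob_eval_preimage hPprob hPinf θ 0 s hs]⟩
      exact heval.comp (measurable_const.indicator (hAmeas k))
    have hmean : (Pinf θ)[Xr 0] = (P θ (A k)).toReal := by
      rw [hXr 0, integral_indicator_const (1 : ℝ) ((measurable_pi_apply 0) (hAmeas k)), measureReal_def,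
        doob_eval_preimage hPprob hPinf θ 0 (A k) (hAmeas k), smul_eq_mul, mul_one]
    have hslln := strong_law_ae_real Xr hint hindep hident
    rw [hmean] at hslln
    filter_upwards [hslln] with x hx
    have heq : ∀ n : ℕ,
        (∑ i ∈ Finset.range n, (A k).indicator (fun _ => (1 : ℝ≥0∞)) (x i)) / (n : ℝ≥0∞)
          = ENNReal.ofReal ((∑ i ∈ Finset.range n, Xr i x) / (n : ℝ)) := by
      intro n
      rcases Nat.eq_zero_or_pos n with rfl | hn
      · simp
      · rw [ENNReal.ofReal_div_of_pos (by exact_mod_cast hn)]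
        congr 1
        · rw [ENNReal.ofReal_sum_of_nonneg (fun i _ => Set.indicator_nonneg (by simp) _)]
          refine Finset.sum_congr rfl fun i _ => ?_
          by_cases hmem : x i ∈ A k <;>
            simp [hXrdef, Set.indicator_apply, hmem]
        · exact (ENNReal.ofReal_natCast n).symm
    have hofReal : Tendsto
        (fun n : ℕ => ENNReal.ofReal ((∑ i ∈ Finset.range n, Xr i x) / (n : ℝ)))
        atTop (𝓝 (P θ (A k))) := by
      have := (ENNReal.continuous_ofReal.tendsto _).comp hx
      rwa [ENNReal.ofReal_toReal (measure_ne_top _ _)] at this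
    have hlim : Filter.limsup (fun n : ℕ =>
        (∑ i ∈ Finset.range n, (A k).indicator (fun _ => (1 : ℝ≥0∞)) (x i)) / (n : ℝ≥0∞))
        atTop = P θ (A k) := by
      have htend : Tendsto (fun n : ℕ =>
          (∑ i ∈ Finset.range n, (A k).indicator (fun _ => (1 : ℝ≥0∞)) (x i)) / (n : ℝ≥0∞))
          atTop (𝓝 (P θ (A k))) := by
        simp only [heq]
        exact hofReal
      exact htend.limsup_eq
    show (Filter.limsup (fun n : ℕ =>
        (∑ i ∈ Finset.range n, (A k).indicator (fun _ => (1 : ℝ≥0∞)) (x i)) / (n : ℝ≥0∞))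
        atTop).toReal = (P θ (A k)).toReal
    rw [hlim]
  filter_upwards [ae_all_iff.mpr hk] with x hx
  have hLx : L x = Φ θ := funext hx
  show r (L x) = θ
  rw [hLx]
  exact congrFun hr θ

theorem doob_posterior_consistency
    {𝒳 Θ : Type*}
    [MetricSpace 𝒳] [CompleteSpace 𝒳] [TopologicalSpace.SeparableSpace 𝒳]
    [MeasurableSpace 𝒳] [BorelSpace 𝒳]
    [MetricSpace Θ] [CompleteSpace Θ] [TopologicalSpace.SeparableSpace Θ]
    [MeasurableSpace Θ] [BorelSpace Θ]
    -- the prior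
    (prior : Measure Θ) [IsProbabilityMeasure prior]
    -- the sampling model θ ↦ P_θ
    (P : Θ → Measure 𝒳) (hPprob : ∀ θ, IsProbabilityMeasure (P θ))
    (hPmeas : ∀ A : Set 𝒳, MeasurableSet A → Measurable fun θ => P θ A)
    (hPinj : Function.Injective P)
    -- the joint law of (θ, (X₁, X₂, …)) : θ ∼ Π and the Xᵢ i.i.d. ∼ P_θ given θ
    (J : Measure (Θ × (ℕ → 𝒳))) [IsProbabilityMeasure J]
    (hJ : ∀ A : Set Θ, MeasurableSet A → ∀ (n : ℕ) (B : Fin n → Set 𝒳),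
      (∀ i, MeasurableSet (B i)) →
      J (A ×ˢ {x : ℕ → 𝒳 | ∀ i : Fin n, x (i : ℕ) ∈ B i})
        = ∫⁻ θ in A, ∏ i : Fin n, P θ (B i) ∂prior)
    -- the infinite product measure P_θ^∞
    (Pinf : Θ → Measure (ℕ → 𝒳)) (hPinfprob : ∀ θ, IsProbabilityMeasure (Pinf θ))
    (hPinf : ∀ (θ : Θ) (n : ℕ) (B : Fin n → Set 𝒳), (∀ i, MeasurableSet (B i)) →
      Pinf θ {x : ℕ → 𝒳 | ∀ i : Fin n, x (i : ℕ) ∈ B i} = ∏ i : Fin n, P θ (B i))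
    -- the posterior distribution given the first n observations
    (post : ℕ → (ℕ → 𝒳) → Measure Θ)
    (hpostprob : ∀ n x, IsProbabilityMeasure (post n x))
    (hpostmeas : ∀ (n : ℕ) (A : Set Θ), MeasurableSet A →
      @Measurable (ℕ → 𝒳) ℝ≥0∞
        (MeasurableSpace.comap (fun x : ℕ → 𝒳 => fun i : Fin n => x (i : ℕ)) inferInstance)
        inferInstance
        (fun x => post n x A))
    (hpost : ∀ (n : ℕ) (A : Set Θ), MeasurableSet A →
      ∀ S : Set (Fin n → 𝒳), MeasurableSet S →
        J (A ×ˢ ((fun x : ℕ → 𝒳 => fun i : Fin n => x (i : ℕ)) ⁻¹' S))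
          = ∫⁻ x in (fun x : ℕ → 𝒳 => fun i : Fin n => x (i : ℕ)) ⁻¹' S,
              post n x A ∂(J.map Prod.snd)) :
    -- conclusion: posterior consistency at Π-almost every θ₀
    ∃ Θstar : Set Θ, MeasurableSet Θstar ∧ prior Θstar = 1 ∧
      ∀ θ₀ ∈ Θstar, ∀ B : Set Θ, IsOpen B → θ₀ ∈ B →
        ∀ᵐ x ∂(Pinf θ₀), Tendsto (fun n => post n x B) atTop (𝓝 1) := by
  classical
  haveI : SecondCountableTopology Θ := UniformSpace.secondCountable_of_separable Θ
  haveI : Nonempty Θ := by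
    by_contra h
    rw [not_nonempty_iff] at h
    have h1 : (univ : Set Θ) = ∅ := univ_eq_empty_iff.mpr h
    have h2 := measure_univ (μ := prior)
    rw [h1, measure_empty] at h2
    exact zero_ne_one h2
  -- rectangles with general measurable sets
  have hrect := doob_rect prior P hPmeas J hJ Pinf hPinfprob hPinf
  -- the kernel θ ↦ Pinf θ and the disintegration J = prior ⊗ₘ κ
  set κ : Kernel Θ (ℕ → 𝒳) :=
    ⟨Pinf, Measure.measurable_of_measurable_coe _ (fun S hS => (hrect hS).1)⟩ with hκdef
  haveI : IsMarkovKernel κ := ⟨fun θ => hPinfprob θ⟩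
  have hcomp : J = prior.compProd κ := by
    refine ext_of_generate_finite _ generateFrom_prod.symm isPiSystem_prod ?_ ?_
    · rintro s ⟨A, hA, S, hS, rfl⟩
      rw [Measure.compProd_apply_prod (show MeasurableSet A from hA)
        (show MeasurableSet S from hS)]
      exact (hrect (show MeasurableSet S from hS)).2 A (show MeasurableSet A from hA)
    · haveI : IsProbabilityMeasure (prior.compProd κ) := by infer_instance
      simp
  -- the a.s. recovery of the parameter
  obtain ⟨T, hTmeas, hT⟩ := doob_T_exists P hPprob hPmeas hPinj Pinf hPinfprob hPinf
  have hTJ : ∀ᵐ ω ∂J, T ω.2 = ω.1 := by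
    rw [hcomp, Measure.ae_compProd_iff
      (MeasureTheory.StronglyMeasurable.measurableSet_eq_fun
        ((show Measurable fun ω : Θ × (ℕ → 𝒳) => T ω.2
            from hTmeas.comp measurable_snd).stronglyMeasurable)
        ((show Measurable fun ω : Θ × (ℕ → 𝒳) => ω.1
            from measurable_fst).stronglyMeasurable))]
    exact ae_of_all _ fun θ => hT θ
  -- the filtration of the first n coordinates
  have hπnmeas : ∀ n : ℕ, Measurable (fun x : ℕ → 𝒳 => fun i : Fin n => x (i : ℕ)) :=
    fun n => measurable_pi_lambda _ fun i => measurable_pi_apply _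
  set ℱ : Filtration ℕ (inferInstance : MeasurableSpace (Θ × (ℕ → 𝒳))) :=
    { seq := fun n => MeasurableSpace.comap
        (fun ω : Θ × (ℕ → 𝒳) => fun i : Fin n => ω.2 (i : ℕ)) inferInstance
      mono' := by
        intro n m hnm
        have hcm : MeasurableSpace.comap
            ((fun v : Fin m → 𝒳 => fun i : Fin n => v ⟨(i : ℕ), lt_of_lt_of_le i.2 hnm⟩)
              ∘ (fun ω : Θ × (ℕ → 𝒳) => fun i : Fin m => ω.2 (i : ℕ))) inferInstance
            ≤ MeasurableSpace.comap
              (fun ω : Θ × (ℕ → 𝒳) => fun i : Fin m => ω.2 (i : ℕ)) inferInstance := by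
          rw [← MeasurableSpace.comap_comp]
          exact MeasurableSpace.comap_mono (measurable_iff_comap_le.mp
            (measurable_pi_lambda _ fun i => measurable_pi_apply _))
        exact hcm
      le' := fun n => measurable_iff_comap_le.mp
        ((hπnmeas n).comp measurable_snd) } with hℱdef
  have hℱn : ∀ n, (ℱ n : MeasurableSpace (Θ × (ℕ → 𝒳))) = MeasurableSpace.comap
      (fun ω : Θ × (ℕ → 𝒳) => fun i : Fin n => ω.2 (i : ℕ)) inferInstance := fun n => rfl
  -- snd is measurable w.r.t. ⨆ n, ℱ n
  have hsnd_sup : Measurable[⨆ n, ℱ n] (fun ω : Θ × (ℕ → 𝒳) => ω.2) := by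
    refine (@measurable_pi_iff _ _ _ (⨆ n, (ℱ n : MeasurableSpace (Θ × (ℕ → 𝒳)))) _
      (fun ω : Θ × (ℕ → 𝒳) => ω.2)).mpr fun i => ?_
    have hbase : Measurable[ℱ (i + 1)]
        (fun ω : Θ × (ℕ → 𝒳) => fun j : Fin (i + 1) => ω.2 (j : ℕ)) :=
      measurable_iff_comap_le.mpr (le_of_eq (hℱn (i + 1)).symm)
    exact ((measurable_pi_apply (⟨i, Nat.lt_succ_self i⟩ : Fin (i + 1))).comp
      (hbase.mono (le_iSup _ (i + 1)) le_rfl))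
  -- the martingale convergence statement, for each measurable U
  have hmart : ∀ U : Set Θ, MeasurableSet U →
      ∀ᵐ ω ∂J, Tendsto (fun n => (post n ω.2 U).toReal) atTop
        (𝓝 (((fun ω : Θ × (ℕ → 𝒳) => T ω.2) ⁻¹' U).indicator (fun _ => (1 : ℝ)) ω)) := by
    intro U hUm
    set g' : Θ × (ℕ → 𝒳) → ℝ :=
      ((fun ω : Θ × (ℕ → 𝒳) => T ω.2) ⁻¹' U).indicator (fun _ => (1 : ℝ)) with hg'def
    have hg'sm : StronglyMeasurable[⨆ n, ℱ n] g' :=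
      stronglyMeasurable_const.indicator ((hTmeas.comp hsnd_sup) hUm)
    have hg'int : Integrable g' J :=
      (integrable_const (1 : ℝ)).indicator ((hTmeas.comp measurable_snd) hUm)
    have hgg' : (U ×ˢ (univ : Set (ℕ → 𝒳))).indicator (fun _ => (1 : ℝ)) =ᵐ[J] g' := by
      filter_upwards [hTJ] with ω hω
      by_cases h : ω.1 ∈ U
      · rw [indicator_of_mem (by exact ⟨h, trivial⟩), hg'def,
          indicator_of_mem (by rw [mem_preimage, hω]; exact h)]
      · rw [indicator_of_notMem (fun hmem => h hmem.1), hg'def,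
          indicator_of_notMem (by rw [mem_preimage, hω]; exact h)]
    -- the posterior is a version of the conditional expectation
    have hpostNmeas : ∀ n, Measurable[ℱ n] (fun ω : Θ × (ℕ → 𝒳) => post n ω.2 U) := by
      intro n
      intro s hs
      obtain ⟨S', hS', hpre⟩ := hpostmeas n U hUm hs
      rw [hℱn n]
      refine ⟨S', hS', ?_⟩
      rw [show (fun ω : Θ × (ℕ → 𝒳) => fun i : Fin n => ω.2 (i : ℕ)) ⁻¹' S'
          = Prod.snd ⁻¹' ((fun x : ℕ → 𝒳 => fun i : Fin n => x (i : ℕ)) ⁻¹' S') from rfl,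
        hpre]
      rfl
    have hcond : ∀ n : ℕ,
        (fun ω : Θ × (ℕ → 𝒳) => (post n ω.2 U).toReal) =ᵐ[J] J[g' | ℱ n] := by
      intro n
      refine ae_eq_condExp_of_forall_setIntegral_eq (ℱ.le n) hg'int ?_ ?_ ?_
      · intro s _ _
        refine Integrable.integrableOn ?_
        refine Integrable.mono' (integrable_const (1 : ℝ)) ?_ (ae_of_all _ fun ω => ?_)
        · exact (((hpostNmeas n).mono (ℱ.le n) le_rfl).ennreal_toReal).aestronglyMeasurable
        · rw [Real.norm_of_nonneg ENNReal.toReal_nonneg]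
          haveI := hpostprob n ω.2
          calc (post n ω.2 U).toReal ≤ (1 : ℝ≥0∞).toReal :=
                ENNReal.toReal_mono ENNReal.one_ne_top prob_le_one
            _ = 1 := ENNReal.toReal_one
      · intro s hs _
        rw [hℱn n] at hs
        obtain ⟨S, hS, rfl⟩ := hs
        have hpre : (fun ω : Θ × (ℕ → 𝒳) => fun i : Fin n => ω.2 (i : ℕ)) ⁻¹' S
            = Prod.snd ⁻¹' ((fun x : ℕ → 𝒳 => fun i : Fin n => x (i : ℕ)) ⁻¹' S) := rfl
        have hpostm0 : Measurable (fun x : ℕ → 𝒳 => post n x U) :=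
          (hpostmeas n U hUm).mono (measurable_iff_comap_le.mp (hπnmeas n)) le_rfl
        have hRHS : ∫ ω in (fun ω : Θ × (ℕ → 𝒳) => fun i : Fin n => ω.2 (i : ℕ)) ⁻¹' S,
            (fun ω : Θ × (ℕ → 𝒳) => (post n ω.2 U).toReal) ω ∂J
            = (J (U ×ˢ ((fun x : ℕ → 𝒳 => fun i : Fin n => x (i : ℕ)) ⁻¹' S))).toReal := by
          rw [hpre, ← setIntegral_map ((hπnmeas n) hS)
            (hpostm0.ennreal_toReal).aestronglyMeasurable measurable_snd.aemeasurable]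
          rw [integral_toReal]
          · rw [← hpost n U hUm S hS]
          · exact (hpostm0.aemeasurable).restrict
          · refine ae_of_all _ fun x => ?_
            haveI := hpostprob n x
            exact lt_of_le_of_lt prob_le_one ENNReal.one_lt_top
        have hLHS : ∫ ω in (fun ω : Θ × (ℕ → 𝒳) => fun i : Fin n => ω.2 (i : ℕ)) ⁻¹' S,
            g' ω ∂J
            = (J (U ×ˢ ((fun x : ℕ → 𝒳 => fun i : Fin n => x (i : ℕ)) ⁻¹' S))).toReal := by
          have hset2 : ((fun ω : Θ × (ℕ → 𝒳) => fun i : Fin n => ω.2 (i : ℕ)) ⁻¹' S)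
              ∩ (U ×ˢ (univ : Set (ℕ → 𝒳)))
              = U ×ˢ ((fun x : ℕ → 𝒳 => fun i : Fin n => x (i : ℕ)) ⁻¹' S) := by
            ext ⟨a, b⟩
            simp only [mem_inter_iff, mem_preimage, mem_prod, mem_univ, and_true]
            exact and_comm
          rw [integral_congr_ae (ae_restrict_of_ae hgg'.symm),
            setIntegral_indicator (hUm.prod MeasurableSet.univ),
            setIntegral_const, smul_eq_mul, mul_one, hset2, measureReal_def]
        rw [hRHS, hLHS]
      · exact StronglyMeasurable.aestronglyMeasurable
          (((hpostNmeas n).ennreal_toReal).stronglyMeasurable)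
    have hlevy := hg'int.tendsto_ae_condExp hg'sm
    filter_upwards [hlevy, ae_all_iff.mpr hcond] with ω h1 h2
    exact h1.congr fun n => (h2 n).symm
  -- countable basis of Θ
  obtain ⟨bas, hbasc, -, hbasis⟩ := TopologicalSpace.exists_countable_basis Θ
  have hbas'c : (insert (∅ : Set Θ) bas).Countable := hbasc.insert ∅
  obtain ⟨V, hVenum⟩ := hbas'c.exists_eq_range (insert_nonempty _ _)
  have hVopen : ∀ k, IsOpen (V k) := by
    intro k
    have hmem : V k ∈ insert (∅ : Set Θ) bas := hVenum ▸ mem_range_self k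
    rcases hmem with h | h
    · rw [h]; exact isOpen_empty
    · exact hbasis.isOpen h
  have hVmeas : ∀ k, MeasurableSet (V k) := fun k => (hVopen k).measurableSet
  -- the J-a.s. convergence statement over the countable basis
  have hae : ∀ᵐ ω ∂J, ∀ k, ω.1 ∈ V k →
      Tendsto (fun n => post n ω.2 (V k)) atTop (𝓝 1) := by
    refine ae_all_iff.mpr fun k => ?_
    filter_upwards [hmart (V k) (hVmeas k), hTJ] with ω hten hω hmem
    have hind : ((fun ω : Θ × (ℕ → 𝒳) => T ω.2) ⁻¹' (V k)).indicator
        (fun _ => (1 : ℝ)) ω = 1 := by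
      rw [indicator_of_mem]
      rw [mem_preimage, hω]
      exact hmem
    rw [hind] at hten
    have h2 := (ENNReal.continuous_ofReal.tendsto 1).comp hten
    rw [ENNReal.ofReal_one] at h2
    refine h2.congr fun n => ?_
    haveI := hpostprob n ω.2
    exact ENNReal.ofReal_toReal (measure_ne_top _ _)
  rw [hcomp] at hae
  have hae2 := Measure.ae_ae_of_ae_compProd hae
  have hnull : prior {θ | ¬ ∀ᵐ x ∂(Pinf θ), ∀ k, θ ∈ V k →
      Tendsto (fun n => post n x (V k)) atTop (𝓝 1)} = 0 := ae_iff.mp hae2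
  obtain ⟨N', hsubN, hNmeas, hN0⟩ := exists_measurable_superset_of_null hnull
  refine ⟨N'ᶜ, hNmeas.compl, ?_, ?_⟩
  · rw [measure_compl hNmeas (measure_ne_top _ _), hN0, measure_univ, tsub_zero]
  · intro θ₀ hθ₀ B hBopen hθ₀B
    have hQ : ∀ᵐ x ∂(Pinf θ₀), ∀ k, θ₀ ∈ V k →
        Tendsto (fun n => post n x (V k)) atTop (𝓝 1) := by
      by_contra h
      exact hθ₀ (hsubN h)
    obtain ⟨v, hv_bas, hv_mem, hv_sub⟩ := hbasis.exists_subset_of_mem_open hθ₀B hBopen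
    obtain ⟨k, hk⟩ : ∃ k, V k = v := by
      have : v ∈ range V := hVenum ▸ mem_insert_of_mem _ hv_bas
      obtain ⟨k, hk⟩ := this
      exact ⟨k, hk⟩
    filter_upwards [hQ] with x hx
    have h1 := hx k (by rw [hk]; exact hv_mem)
    refine tendsto_of_tendsto_of_tendsto_of_le_of_le h1 tendsto_const_nhds ?_ ?_
    · intro n
      exact measure_mono (by rw [hk]; exact hv_sub)
    · intro n
      haveI := hpostprob n x
      exact prob_le_one
end

section
/- Let X = (X(t))_{t∈[0,1]} be a stochastic process on a probability space (Ω,ℱ,ℙ) with continuous sample paths, each X(t) square-integrable with E[X(t)] = 0, whose covariance function K(s,t) = E[X(s)X(t)] is strictly positive definite; let μ be the law of X on C([0,1],ℝ). Let θ = (β, t, α₀, σ²) with β ∈ ℝ^p, β_j ≠ 0 for all j, t₁ < ⋯ < t_p in [0,1], α₀ ∈ ℝ, σ² ≥ 0, and similarly θ' = (β', t', α₀', σ'²) with β'_j ≠ 0 for all j and t'₁ < ⋯ < t'_{p'}. If the model distributions coincide, P_θ(X,Y) = P_{θ'}(X,Y) as measures on C([0,1],ℝ) × ℝ, then p = p',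 β = β', t = t', α₀ = α₀' and σ² = σ'². -/
open MeasureTheory ProbabilityTheory Set
open scoped ENNReal NNReal

noncomputable section

/-!
STATEMENT 9: identifiability of the linear RKHS model.  Let X be a process with
continuous sample paths, centered square-integrable marginals, and strictly positive
definite covariance, with law μ on C([0,1],ℝ).  If θ = (β, t, α₀, σ²) and
θ' = (β', t', α₀', σ'²) have all coefficients nonzero and strictly increasing times,
and P_θ(X,Y) = P_{θ'}(X,Y), then p = p', β = β', t = t', α₀ = α₀' and σ² = σ'².
-/

/-- The interval [0,1]. -/
abbrev I01 : Type := Set.Icc (0:ℝ) 1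

/-- C([0,1], ℝ) with its Borel σ-algebra. -/
abbrev CI : Type := C(I01, ℝ)

instance : MeasurableSpace CI := borel CI
instance : BorelSpace CI := ⟨rfl⟩

/-- Model distribution P_θ(X,Y) on C([0,1],ℝ) × ℝ: first marginal μ, and conditionally
on X = x, Y is Gaussian with mean α₀ + Σ_j β_j x(t_j) and variance σ². -/
def Pmod (μ : Measure CI) {p : ℕ} (θ : (Fin p → ℝ) × (Fin p → I01) × ℝ × ℝ≥0) :
    Measure (CI × ℝ) :=
  μ.bind fun x =>
    (gaussianReal (θ.2.2.1 + ∑ j, θ.1 j * x (θ.2.1 j)) θ.2.2.2).map (Prod.mk x)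

section Aux

open Real

lemma gaussianPDFReal_le_max (m : ℝ) (v : ℝ≥0) (x : ℝ) :
    gaussianPDFReal m v x ≤ gaussianPDFReal m v m := by
  unfold gaussianPDFReal
  refine mul_le_mul_of_nonneg_left (Real.exp_le_exp.2 ?_) (by positivity)
  have h1 : -(x - m)^2 / (2*(v:ℝ)) ≤ 0 :=
    div_nonpos_of_nonpos_of_nonneg (neg_nonpos.2 (sq_nonneg _)) (by positivity)
  have h2 : -(m - m)^2 / (2*(v:ℝ)) = 0 := by simp
  linarith

lemma gaussianPDFReal_eq_max {m x : ℝ} {v : ℝ≥0} (hv : v ≠ 0)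
    (h : gaussianPDFReal m v x = gaussianPDFReal m v m) : x = m := by
  have hv' : (0:ℝ) < v := by positivity
  unfold gaussianPDFReal at h
  have hc : (0:ℝ) < (√(2 * π * v))⁻¹ := by positivity
  have hexp : rexp (-(x - m)^2 / (2*(v:ℝ))) = rexp (-(m - m)^2 / (2*(v:ℝ))) :=
    mul_left_cancel₀ (ne_of_gt hc) h
  rw [Real.exp_eq_exp] at hexp
  have h2 : -(m - m)^2 / (2*(v:ℝ)) = 0 := by simp
  rw [h2, div_eq_zero_iff] at hexp
  rcases hexp with h3 | h3
  · have : (x - m)^2 = 0 := by linarith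
    have := pow_eq_zero_iff (n := 2) (by norm_num) |>.mp this
    linarith
  · exfalso; nlinarith

lemma continuous_gaussianPDFReal (m : ℝ) (v : ℝ≥0) : Continuous (gaussianPDFReal m v) := by
  unfold gaussianPDFReal
  fun_prop

lemma gaussianReal_inj {m m' : ℝ} {v v' : ℝ≥0}
    (h : gaussianReal m v = gaussianReal m' v') : m = m' ∧ v = v' := by
  by_cases hv : v = 0 <;> by_cases hv' : v' = 0
  · subst hv; subst hv'
    rw [gaussianReal_zero_var, gaussianReal_zero_var] at h
    refine ⟨?_, rfl⟩
    by_contra hmm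
    have h1 : Measure.dirac m {m} = 1 := by
      rw [Measure.dirac_apply]; simp
    have h2 : Measure.dirac m' {m} = 0 := by
      rw [Measure.dirac_apply]; simp [Ne.symm hmm]
    rw [h] at h1; rw [h1] at h2; exact one_ne_zero h2
  · exfalso
    have h2 : gaussianReal m' v' {m} = 0 :=
      gaussianReal_absolutelyContinuous m' hv' (measure_singleton m)
    have h1 : gaussianReal m v {m} = 1 := by
      rw [hv, gaussianReal_zero_var, Measure.dirac_apply]; simp
    rw [h, h2] at h1; exact one_ne_zero h1.symm
  · exfalso
    have h2 : gaussianReal m v {m'} = 0 :=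
      gaussianReal_absolutelyContinuous m hv (measure_singleton m')
    have h1 : gaussianReal m' v' {m'} = 1 := by
      rw [hv', gaussianReal_zero_var, Measure.dirac_apply]; simp
    rw [← h, h2] at h1; exact one_ne_zero h1.symm
  · have hd : gaussianPDF m v =ᵐ[volume] gaussianPDF m' v' :=
      (rnDeriv_gaussianReal m v).symm.trans (by rw [h]; exact rnDeriv_gaussianReal m' v')
    have hr : gaussianPDFReal m v =ᵐ[volume] gaussianPDFReal m' v' := by
      filter_upwards [hd] with x hx
      have h2 := congrArg ENNReal.toReal hx
      rwa [gaussianPDF, gaussianPDF, ENNReal.toReal_ofReal (gaussianPDFReal_nonneg _ _ _),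
        ENNReal.toReal_ofReal (gaussianPDFReal_nonneg _ _ _)] at h2
    have hfun : gaussianPDFReal m v = gaussianPDFReal m' v' :=
      (Continuous.ae_eq_iff_eq volume (continuous_gaussianPDFReal m v)
        (continuous_gaussianPDFReal m' v')).mp hr
    have hmax : gaussianPDFReal m v m' = gaussianPDFReal m v m := by
      refine le_antisymm (gaussianPDFReal_le_max _ _ _) ?_
      calc gaussianPDFReal m v m = gaussianPDFReal m' v' m := congrFun hfun m
        _ ≤ gaussianPDFReal m' v' m' := gaussianPDFReal_le_max _ _ _
        _ = gaussianPDFReal m v m' := (congrFun hfun m').symm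
    have hm : m' = m := gaussianPDFReal_eq_max hv hmax
    refine ⟨hm.symm, ?_⟩
    have h2 := congrFun hfun m
    rw [hm] at h2
    unfold gaussianPDFReal at h2
    simp only [sub_self, ne_eq, OfNat.ofNat_ne_zero, not_false_eq_true, zero_pow, neg_zero,
      zero_div, Real.exp_zero, mul_one] at h2
    have h3 : √(2 * π * v) = √(2 * π * v') := by
      have := inv_injective h2; exact this
    have h4 : 2 * π * (v:ℝ) = 2 * π * v' := by
      have hnn : (0:ℝ) ≤ 2 * π * v := by positivity
      have hnn' : (0:ℝ) ≤ 2 * π * v' := by positivity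
      nlinarith [Real.sq_sqrt hnn, Real.sq_sqrt hnn', Real.sqrt_nonneg (2*π*(v:ℝ))]
    have h5 : (v:ℝ) = v' := by
      have hπ : (0:ℝ) < π := Real.pi_pos
      nlinarith
    exact NNReal.coe_injective h5

lemma measurable_gaussianReal_comp {α : Type*} [MeasurableSpace α] {f : α → ℝ}
    (hf : Measurable f) (v : ℝ≥0) : Measurable fun a => gaussianReal (f a) v := by
  by_cases hv : v = 0
  · subst hv
    simp only [gaussianReal_zero_var]
    exact Measure.measurable_dirac.comp hf
  · refine Measure.measurable_measure.mpr fun s hs => ?_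
    have hrw : ∀ a, gaussianReal (f a) v s = ∫⁻ x in s, gaussianPDF (f a) v x :=
      fun a => gaussianReal_apply _ hv s
    simp_rw [hrw]
    have hj : Measurable (Function.uncurry fun a (x : ℝ) => gaussianPDF (f a) v x) := by
      unfold gaussianPDF gaussianPDFReal
      apply Measurable.ennreal_ofReal
      apply Measurable.const_mul
      apply Real.measurable_exp.comp
      exact (((measurable_snd.sub (hf.comp measurable_fst)).pow_const 2).neg).div_const _
    exact hj.lintegral_prod_right'

def gaussKer {α : Type*} [MeasurableSpace α] (f : α → ℝ) (hf : Measurable f) (v : ℝ≥0) :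
    ProbabilityTheory.Kernel α ℝ :=
  ⟨fun a => gaussianReal (f a) v, measurable_gaussianReal_comp hf v⟩

@[simp] lemma gaussKer_apply {α : Type*} [MeasurableSpace α] (f : α → ℝ) (hf : Measurable f)
    (v : ℝ≥0) (a : α) : gaussKer f hf v a = gaussianReal (f a) v := rfl

instance {α : Type*} [MeasurableSpace α] (f : α → ℝ) (hf : Measurable f) (v : ℝ≥0) :
    IsMarkovKernel (gaussKer f hf v) := ⟨fun _ => by rw [gaussKer_apply]; infer_instance⟩

lemma bind_map_eq_compProd {α : Type*} [MeasurableSpace α] (μ : Measure α) [SFinite μ]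
    (κ : ProbabilityTheory.Kernel α ℝ) [ProbabilityTheory.IsSFiniteKernel κ] :
    (μ.bind fun x => (κ x).map (Prod.mk x)) = μ.compProd κ := by
  ext s hs
  rw [Measure.bind_apply hs ?hm, Measure.compProd_apply hs]
  · exact lintegral_congr fun x => Measure.map_apply measurable_prodMk_left hs
  case hm =>
    refine (Measure.measurable_measure.mpr fun u hu => ?_).aemeasurable
    simp_rw [Measure.map_apply measurable_prodMk_left hu]
    exact Kernel.measurable_kernel_prodMk_left hu

end Aux

theorem model_identifiability
    {Ω : Type*} [MeasurableSpace Ω] (Pr : Measure Ω) [IsProbabilityMeasure Pr]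
    (X : Ω → CI) (hX : Measurable X)
    (hL2 : ∀ t : I01, MemLp (fun ω => X ω t) 2 Pr)
    (hcent : ∀ t : I01, ∫ ω, X ω t ∂Pr = 0)
    -- K(s,t) = E[X(s)X(t)] is strictly positive definite
    (hK : ∀ (m : ℕ) (ts : Fin m → I01), Function.Injective ts →
      ∀ c : Fin m → ℝ, c ≠ 0 →
        0 < ∑ i, ∑ j, c i * c j * ∫ ω, X ω (ts i) * X ω (ts j) ∂Pr)
    {p p' : ℕ} (hp : 1 ≤ p) (hp' : 1 ≤ p')
    (β : Fin p → ℝ) (t : Fin p → I01) (α₀ : ℝ) (v : ℝ≥0)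
    (β' : Fin p' → ℝ) (t' : Fin p' → I01) (α₀' : ℝ) (v' : ℝ≥0)
    (hβ : ∀ j, β j ≠ 0) (ht : StrictMono t)
    (hβ' : ∀ j, β' j ≠ 0) (ht' : StrictMono t')
    (heq : Pmod (Pr.map X) (β, t, α₀, v) = Pmod (Pr.map X) (β', t', α₀', v')) :
    ∃ h : p = p', (∀ j, β j = β' (Fin.cast h j)) ∧ (∀ j, t j = t' (Fin.cast h j))
      ∧ α₀ = α₀' ∧ v = v' := by
  set μ : Measure CI := Pr.map X with hμ
  haveI : IsProbabilityMeasure μ := Measure.isProbabilityMeasure_map hX.aemeasurable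
  have heval : ∀ u : I01, Measurable fun x : CI => x u := fun u =>
    (continuous_eval_const u).measurable
  set f : CI → ℝ := fun x => α₀ + ∑ j, β j * x (t j) with hfdef
  set f' : CI → ℝ := fun x => α₀' + ∑ j, β' j * x (t' j) with hf'def
  have hf : Measurable f :=
    measurable_const.add (Finset.measurable_sum _ fun j _ => (heval (t j)).const_mul _)
  have hf' : Measurable f' :=
    measurable_const.add (Finset.measurable_sum _ fun j _ => (heval (t' j)).const_mul _)
  set κ := gaussKer f hf v with hκdef
  set κ' := gaussKer f' hf' v' with hκ'def
  have h1 : Pmod μ (β, t, α₀, v) = μ.compProd κ := bind_map_eq_compProd μ κ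
  have h2 : Pmod μ (β', t', α₀', v') = μ.compProd κ' := bind_map_eq_compProd μ κ'
  set ρ : Measure (CI × ℝ) := μ.compProd κ with hρ
  have hfst : ρ.fst = μ := Measure.fst_compProd μ κ
  have hcd : ρ = ρ.fst ⊗ₘ κ := by rw [hfst]
  have hcd' : ρ = ρ.fst ⊗ₘ κ' := by rw [hfst, hρ, ← h2, ← heq, h1, hρ]
  have e1 : ∀ᵐ x ∂ρ.fst, κ x = ρ.condKernel x :=
    eq_condKernel_of_measure_eq_compProd_real κ hcd
  have e2 : ∀ᵐ x ∂ρ.fst, κ' x = ρ.condKernel x :=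
    eq_condKernel_of_measure_eq_compProd_real κ' hcd'
  rw [hfst] at e1 e2
  have e3 : ∀ᵐ x ∂μ, f x = f' x ∧ v = v' := by
    filter_upwards [e1, e2] with x hx1 hx2
    have : gaussianReal (f x) v = gaussianReal (f' x) v' := by
      rw [← gaussKer_apply f hf v x, ← gaussKer_apply f' hf' v' x, hx1, hx2]
    exact gaussianReal_inj this
  have hvv : v = v' := by
    obtain ⟨x, _, hx⟩ := e3.exists
    exact hx
  have e4 : ∀ᵐ x ∂μ, f x = f' x := by filter_upwards [e3] with x hx using hx.1
  have hset : MeasurableSet {x : CI | f x = f' x} := measurableSet_eq_fun hf hf'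
  have hmean : ∀ᵐ ω ∂Pr,
      α₀ + ∑ j, β j * X ω (t j) = α₀' + ∑ j, β' j * X ω (t' j) :=
    (MeasureTheory.ae_map_iff hX.aemeasurable hset).mp e4
  clear e1 e2 e3 e4 hset hcd hcd' hfst h1 h2 heq
  classical
  -- integrability facts
  have hint : ∀ u : I01, Integrable (fun ω => X ω u) Pr := fun u =>
    (hL2 u).integrable one_le_two
  have hintmul : ∀ u u' : I01, Integrable (fun ω => X ω u * X ω u') Pr := by
    intro u u'
    have hpqr : (1 : ℝ≥0∞) / 1 = 1 / 2 + 1 / 2 := by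
      rw [ENNReal.add_halves]; norm_num
    have := (hL2 u').smul (r := 1) (hL2 u) (hpqr := ⟨by rw [inv_one]; exact ENNReal.inv_two_add_inv_two⟩)
    rw [memLp_one_iff_integrable] at this
    exact this
  -- the combined point set
  set S : Finset I01 := Finset.image t Finset.univ ∪ Finset.image t' Finset.univ with hS
  set n := S.card with hn
  set e := S.equivFin with he
  set ts : Fin n → I01 := fun i => (e.symm i : I01) with hts
  have hts_inj : Function.Injective ts :=
    fun i j h => e.symm.injective (Subtype.ext h)
  set A : I01 → ℝ := fun u =>
    (∑ j ∈ Finset.univ.filter fun j => t j = u, β j)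
      - ∑ j ∈ Finset.univ.filter fun j => t' j = u, β' j with hA
  set c : Fin n → ℝ := fun i => A (ts i) with hc
  -- reindexing identity
  have hreindex : ∀ F : I01 → ℝ, ∑ i, F (ts i) = ∑ u ∈ S, F u := by
    intro F
    rw [← Finset.sum_coe_sort S F]
    exact Equiv.sum_comp e.symm (fun a : ↥S => F a)
  -- key sum identity
  have hkey : ∀ g : I01 → ℝ,
      ∑ i, c i * g (ts i) = (∑ j, β j * g (t j)) - ∑ j, β' j * g (t' j) := by
    intro g
    have h1 : ∑ i, c i * g (ts i) = ∑ u ∈ S, A u * g u := hreindex (fun u => A u * g u)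
    rw [h1, hA]
    simp only [sub_mul, Finset.sum_sub_distrib]
    congr 1
    · rw [← Finset.sum_fiberwise_of_maps_to (g := t) (t := S)
        (fun j _ => Finset.mem_union_left _ (Finset.mem_image_of_mem t (Finset.mem_univ j)))
        (fun j => β j * g (t j))]
      refine Finset.sum_congr rfl fun u _ => ?_
      rw [Finset.sum_mul]
      refine Finset.sum_congr rfl fun j hj => ?_
      rw [(Finset.mem_filter.mp hj).2]
    · rw [← Finset.sum_fiberwise_of_maps_to (g := t') (t := S)
        (fun j _ => Finset.mem_union_right _ (Finset.mem_image_of_mem t' (Finset.mem_univ j)))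
        (fun j => β' j * g (t' j))]
      refine Finset.sum_congr rfl fun u _ => ?_
      rw [Finset.sum_mul]
      refine Finset.sum_congr rfl fun j hj => ?_
      rw [(Finset.mem_filter.mp hj).2]
  set W : Ω → ℝ := fun ω => ∑ i, c i * X ω (ts i) with hW
  have hWint : Integrable W Pr :=
    integrable_finset_sum _ fun i _ => ((hint (ts i)).const_mul (c i))
  have hWzero_mean : ∫ ω, W ω ∂Pr = 0 := by
    rw [hW, integral_finset_sum _ fun i _ => ((hint (ts i)).const_mul (c i))]
    simp only [integral_const_mul]
    simp [hcent]
  have hWaff : ∀ᵐ ω ∂Pr, (α₀ - α₀') + W ω = 0 := by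
    filter_upwards [hmean] with ω hω
    have := hkey (fun u => X ω u)
    simp only [hW]
    rw [this]
    linarith
  have hα : α₀ = α₀' := by
    have hz : ∫ ω, ((α₀ - α₀') + W ω) ∂Pr = 0 :=
      integral_eq_zero_of_ae hWaff
    rw [integral_add (integrable_const _) hWint, integral_const, hWzero_mean] at hz
    simp at hz
    linarith
  have hW0 : ∀ᵐ ω ∂Pr, W ω = 0 := by
    filter_upwards [hWaff] with ω hω
    rw [hα] at hω; linarith
  have hW2 : ∫ ω, W ω * W ω ∂Pr = 0 := by
    refine integral_eq_zero_of_ae ?_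
    filter_upwards [hW0] with ω hω
    rw [hω]; simp
  have hexpand : ∫ ω, W ω * W ω ∂Pr
      = ∑ i, ∑ j, c i * c j * ∫ ω, X ω (ts i) * X ω (ts j) ∂Pr := by
    have hptw : ∀ ω, W ω * W ω
        = ∑ i, ∑ j, c i * c j * (X ω (ts i) * X ω (ts j)) := by
      intro ω
      rw [hW]
      rw [Finset.sum_mul_sum]
      refine Finset.sum_congr rfl fun i _ => Finset.sum_congr rfl fun j _ => by ring
    simp_rw [hptw]
    rw [integral_finset_sum _ fun i _ => ?_]
    · refine Finset.sum_congr rfl fun i _ => ?_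
      rw [integral_finset_sum _ fun j _ => ((hintmul (ts i) (ts j)).const_mul _)]
      exact Finset.sum_congr rfl fun j _ => integral_const_mul _ _
    · exact integrable_finset_sum _ fun j _ => ((hintmul (ts i) (ts j)).const_mul _)
  have hczero : c = 0 := by
    by_contra hc0
    have := hK n ts hts_inj c hc0
    rw [← hexpand, hW2] at this
    exact lt_irrefl 0 this
  -- fibers
  have hAzero : ∀ u ∈ S, A u = 0 := by
    intro u hu
    have : ts (e ⟨u, hu⟩) = u := by simp [hts]
    have h2 := congrFun hczero (e ⟨u, hu⟩)
    rw [hc] at h2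
    simpa [this] using h2
  have hfil : ∀ j : Fin p, (Finset.univ.filter fun k => t k = t j) = {j} := by
    intro j; ext k; simp [ht.injective.eq_iff]
  have hfil' : ∀ j : Fin p', (Finset.univ.filter fun k => t' k = t' j) = {j} := by
    intro j; ext k; simp [ht'.injective.eq_iff]
  have hmatch : ∀ j : Fin p, ∃ k : Fin p', t' k = t j ∧ β' k = β j := by
    intro j
    have hu : t j ∈ S := Finset.mem_union_left _ (Finset.mem_image_of_mem t (Finset.mem_univ j))
    have h0 := hAzero (t j) hu
    rw [hA] at h0
    simp only at h0
    rw [hfil j, Finset.sum_singleton] at h0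
    have hne : (Finset.univ.filter fun k => t' k = t j).Nonempty := by
      by_contra hne
      rw [Finset.not_nonempty_iff_eq_empty] at hne
      rw [hne, Finset.sum_empty] at h0
      exact hβ j (by linarith)
    obtain ⟨k, hk⟩ := hne
    have hkk : t' k = t j := (Finset.mem_filter.mp hk).2
    have hfk : (Finset.univ.filter fun k' => t' k' = t j) = {k} := by
      ext k'; simp only [Finset.mem_filter, Finset.mem_univ, true_and, Finset.mem_singleton]
      constructor
      · intro h'; exact ht'.injective (h'.trans hkk.symm)
      · intro h'; rw [h']; exact hkk
    rw [hfk, Finset.sum_singleton] at h0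
    exact ⟨k, hkk, by linarith⟩
  have hmatch' : ∀ k : Fin p', ∃ j : Fin p, t j = t' k ∧ β j = β' k := by
    intro k
    have hu : t' k ∈ S := Finset.mem_union_right _ (Finset.mem_image_of_mem t' (Finset.mem_univ k))
    have h0 := hAzero (t' k) hu
    rw [hA] at h0
    simp only at h0
    rw [hfil' k, Finset.sum_singleton] at h0
    have hne : (Finset.univ.filter fun j => t j = t' k).Nonempty := by
      by_contra hne
      rw [Finset.not_nonempty_iff_eq_empty] at hne
      rw [hne, Finset.sum_empty] at h0
      exact hβ' k (by linarith)
    obtain ⟨j, hj⟩ := hne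
    have hjj : t j = t' k := (Finset.mem_filter.mp hj).2
    have hfj : (Finset.univ.filter fun j' => t j' = t' k) = {j} := by
      ext j'; simp only [Finset.mem_filter, Finset.mem_univ, true_and, Finset.mem_singleton]
      constructor
      · intro h'; exact ht.injective (h'.trans hjj.symm)
      · intro h'; rw [h']; exact hjj
    rw [hfj, Finset.sum_singleton] at h0
    exact ⟨j, hjj, by linarith⟩
  choose F hF1 hF2 using hmatch
  choose G hG1 _ using hmatch'
  have hFinj : Function.Injective F := by
    intro a b hab
    apply ht.injective
    rw [← hF1 a, ← hF1 b, hab]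
  have hGinj : Function.Injective G := by
    intro a b hab
    apply ht'.injective
    rw [← hG1 a, ← hG1 b, hab]
  have h : p = p' := by
    have h1 := Fintype.card_le_of_injective F hFinj
    have h2 := Fintype.card_le_of_injective G hGinj
    simp only [Fintype.card_fin] at h1 h2
    omega
  have hFmono : StrictMono F := by
    intro a b hab
    have := ht hab
    rw [← hF1 a, ← hF1 b] at this
    exact ht'.lt_iff_lt.mp this
  have hcastmono : StrictMono (fun j : Fin p => Fin.cast h j) := fun a b hab => hab
  have hFsurj : Function.Surjective F := by
    have := (Fintype.bijective_iff_injective_and_card F).mpr ⟨hFinj, by simp [h]⟩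
    exact this.2
  haveI : WellFoundedLT (Fin p) := Finite.to_wellFoundedLT
  have hFeq : F = fun j => Fin.cast h j := by
    have hr : range F = range (fun j : Fin p => Fin.cast h j) := by
      rw [hFsurj.range_eq]
      exact ((finCongr h).surjective.range_eq).symm
    exact (hFmono.range_inj hcastmono).mp hr
  refine ⟨h, fun j => ?_, fun j => ?_, hα, hvv⟩
  · rw [← hF2 j, hFeq]
  · rw [← hF1 j, hFeq]
end
end

section
/- Let X = (X(t))_{t∈[0,1]} be a stochastic process on a probability space (Ω,ℱ,ℙ) such that each X(t) is square-integrable and E[X(t)] = 0, and suppose its covariance function K(s,t) = E[X(s)X(t)] is strictly positive definite, meaning that for every m ≥ 1, every collection of distinct points t₁,…,t_m ∈ [0,1] and every nonzero c ∈ ℝ^m, Σ_{i,j} c_i c_j K(t_i,t_j) > 0. Let β ∈ ℝ^p with β_j ≠ 0 for all j and t₁ < ⋯ < t_p in [0,1], β' ∈ ℝ^{p'} with β'_j ≠ 0 for all j and t'₁ < ⋯ < t'_{p'} in [0,1], and α₀, α₀' ∈ ℝ. If the logistic success probabilities coincide almost surely, i.e. 1/(1 + exp(−α₀ − Σ_{j=1}^p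 β_j X(t_j))) = 1/(1 + exp(−α₀' − Σ_{j=1}^{p'} β'_j X(t'_j))) ℙ-almost surely, then p = p', α₀ = α₀', β = β' and t = t'. -/
open MeasureTheory Set
open scoped ENNReal NNReal

noncomputable section

theorem my_int_mul {α : Type*} [MeasurableSpace α] {μ : Measure α} {f g : α → ℝ}
    (hf : MemLp f 2 μ) (hg : MemLp g 2 μ) : Integrable (fun x => f x * g x) μ := by
  have := hg.smul (r := 1) hf
  rw [memLp_one_iff_integrable] at this
  exact this.congr (Filter.Eventually.of_forall fun x => by simp [mul_comm])

theorem logistic_model_identifiability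
    {Ω : Type*} [MeasurableSpace Ω] (Pr : Measure Ω) [IsProbabilityMeasure Pr]
    (X : I01 → Ω → ℝ)
    (hL2 : ∀ t, MemLp (X t) 2 Pr)
    (hcent : ∀ t, ∫ ω, X t ω ∂Pr = 0)
    -- K(s,t) = E[X(s)X(t)] is strictly positive definite
    (hK : ∀ (m : ℕ) (ts : Fin m → I01), Function.Injective ts →
      ∀ c : Fin m → ℝ, c ≠ 0 →
        0 < ∑ i, ∑ j, c i * c j * ∫ ω, X (ts i) ω * X (ts j) ω ∂Pr)
    {p p' : ℕ} (hp : 1 ≤ p) (hp' : 1 ≤ p')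
    (β : Fin p → ℝ) (t : Fin p → I01) (α₀ : ℝ)
    (β' : Fin p' → ℝ) (t' : Fin p' → I01) (α₀' : ℝ)
    (hβ : ∀ j, β j ≠ 0) (ht : StrictMono t)
    (hβ' : ∀ j, β' j ≠ 0) (ht' : StrictMono t')
    (h : ∀ᵐ ω ∂Pr,
      1 / (1 + Real.exp (-α₀ - ∑ j, β j * X (t j) ω))
        = 1 / (1 + Real.exp (-α₀' - ∑ j, β' j * X (t' j) ω))) :
    ∃ hpp : p = p', α₀ = α₀' ∧ (∀ j, β j = β' (Fin.cast hpp j))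
      ∧ (∀ j, t j = t' (Fin.cast hpp j)) := by
  classical
  -- Step 1: almost sure linear equality
  have hlin : ∀ᵐ ω ∂Pr, α₀ + ∑ j, β j * X (t j) ω = α₀' + ∑ j, β' j * X (t' j) ω := by
    filter_upwards [h] with ω hω
    set u := -α₀ - ∑ j, β j * X (t j) ω with hu
    set v := -α₀' - ∑ j, β' j * X (t' j) ω with hv
    have h1 : (0:ℝ) < 1 + Real.exp u := by positivity
    have h2 : (0:ℝ) < 1 + Real.exp v := by positivity
    field_simp at hω
    have huv := Real.exp_injective (by linarith : Real.exp v = Real.exp u)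
    linarith [hω, hu, hv]
  -- combined set of time points
  set A : Finset I01 := Finset.image t Finset.univ ∪ Finset.image t' Finset.univ with hA
  set c : I01 → ℝ := fun s =>
    (∑ j, if t j = s then β j else 0) - (∑ j, if t' j = s then β' j else 0) with hc
  have htmem : ∀ j, t j ∈ A := fun j => Finset.mem_union_left _ (Finset.mem_image_of_mem _ (Finset.mem_univ j))
  have ht'mem : ∀ j, t' j ∈ A := fun j => Finset.mem_union_right _ (Finset.mem_image_of_mem _ (Finset.mem_univ j))
  have hsub : ∀ (q : ℕ) (γ : Fin q → ℝ) (τ : Fin q → I01), (∀ j, τ j ∈ A) → ∀ ω,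
      (∑ s ∈ A, (∑ j, if τ j = s then γ j else 0) * X s ω) = ∑ j, γ j * X (τ j) ω := by
    intro q γ τ hτ ω
    have : ∀ s ∈ A, (∑ j, if τ j = s then γ j else 0) * X s ω
        = ∑ j, if τ j = s then γ j * X s ω else 0 := by
      intro s _; rw [Finset.sum_mul]; exact Finset.sum_congr rfl fun j _ => by
        split <;> simp
    rw [Finset.sum_congr rfl this, Finset.sum_comm]
    refine Finset.sum_congr rfl fun j _ => ?_
    rw [Finset.sum_ite_eq A (τ j) (fun s => γ j * X s ω), if_pos (hτ j)]
  have hYrep : ∀ ω, (∑ s ∈ A, c s * X s ω)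
      = (∑ j, β j * X (t j) ω) - (∑ j, β' j * X (t' j) ω) := by
    intro ω
    have : ∀ s ∈ A, c s * X s ω = (∑ j, if t j = s then β j else 0) * X s ω
        - (∑ j, if t' j = s then β' j else 0) * X s ω := fun s _ => by
      simp only [hc]; ring
    rw [Finset.sum_congr rfl this, Finset.sum_sub_distrib,
      hsub p β t htmem ω, hsub p' β' t' ht'mem ω]
  -- Step 2: α₀ = α₀'
  have hInt : ∀ s, Integrable (X s) Pr := fun s => (hL2 s).integrable one_le_two
  have hIsum : ∀ (q : ℕ) (γ : Fin q → ℝ) (τ : Fin q → I01),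
      Integrable (fun ω => ∑ j, γ j * X (τ j) ω) Pr := fun q γ τ =>
    integrable_finset_sum _ fun j _ => (hInt (τ j)).const_mul _
  have hY0 : ∫ ω, ((∑ j, β j * X (t j) ω) - (∑ j, β' j * X (t' j) ω)) ∂Pr = 0 := by
    rw [integral_sub (hIsum p β t) (hIsum p' β' t'), integral_finset_sum _
      (fun j _ => (hInt (t j)).const_mul _), integral_finset_sum _
      (fun j _ => (hInt (t' j)).const_mul _)]
    simp [integral_const_mul, hcent]
  have hconst : ∀ᵐ ω ∂Pr,
      (∑ j, β j * X (t j) ω) - (∑ j, β' j * X (t' j) ω) = α₀' - α₀ := by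
    filter_upwards [hlin] with ω hω; linarith
  have hα : α₀ = α₀' := by
    have := integral_congr_ae (g := fun _ => α₀' - α₀) hconst
    rw [hY0, integral_const] at this
    simp at this; linarith
  -- Step 3: the combination vanishes a.s., hence the quadratic form is zero
  have hYae : ∀ᵐ ω ∂Pr, (∑ s ∈ A, c s * X s ω) = 0 := by
    filter_upwards [hlin] with ω hω
    rw [hYrep]; linarith [hα]
  have hsq : ∫ ω, (∑ s ∈ A, c s * X s ω) ^ 2 ∂Pr = 0 := by
    rw [integral_congr_ae (g := fun _ => (0:ℝ)) (hYae.mono fun ω hω => by rw [hω]; ring)]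
    simp
  have hQ : ∑ s ∈ A, ∑ s' ∈ A, c s * c s' * ∫ ω, X s ω * X s' ω ∂Pr = 0 := by
    rw [← hsq]
    have hexp : ∀ ω, (∑ s ∈ A, c s * X s ω) ^ 2
        = ∑ s ∈ A, ∑ s' ∈ A, c s * c s' * (X s ω * X s' ω) := by
      intro ω
      rw [sq, Finset.sum_mul_sum]
      exact Finset.sum_congr rfl fun s _ => Finset.sum_congr rfl fun s' _ => by ring
    calc ∑ s ∈ A, ∑ s' ∈ A, c s * c s' * ∫ ω, X s ω * X s' ω ∂Pr
        = ∑ s ∈ A, ∑ s' ∈ A, ∫ ω, c s * c s' * (X s ω * X s' ω) ∂Pr := by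
          refine Finset.sum_congr rfl fun s _ => Finset.sum_congr rfl fun s' _ => ?_
          rw [integral_const_mul]
      _ = ∑ s ∈ A, ∫ ω, ∑ s' ∈ A, c s * c s' * (X s ω * X s' ω) ∂Pr := by
          refine Finset.sum_congr rfl fun s _ => ?_
          rw [integral_finset_sum _ fun s' _ =>
            (my_int_mul (hL2 s) (hL2 s')).const_mul _]
      _ = ∫ ω, ∑ s ∈ A, ∑ s' ∈ A, c s * c s' * (X s ω * X s' ω) ∂Pr := by
          rw [integral_finset_sum _ fun s _ => integrable_finset_sum _ fun s' _ =>
            (my_int_mul (hL2 s) (hL2 s')).const_mul _]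
      _ = ∫ ω, (∑ s ∈ A, c s * X s ω) ^ 2 ∂Pr := by
          exact integral_congr_ae (Filter.Eventually.of_forall fun ω => (hexp ω).symm)
  -- Step 4: apply strict positive definiteness to get c ≡ 0 on A
  set ts : Fin A.card → I01 := fun i => A.orderEmbOfFin rfl i with hts
  have htsinj : Function.Injective ts := (A.orderEmbOfFin rfl).injective
  have himgts : Finset.image ts Finset.univ = A := by
    apply Finset.coe_injective
    rw [Finset.coe_image, Finset.coe_univ, Set.image_univ]
    exact A.range_orderEmbOfFin rfl
  have hreindex : ∀ f : I01 → ℝ, ∑ i, f (ts i) = ∑ s ∈ A, f s := by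
    intro f
    rw [← Finset.sum_coe_sort A f]
    exact Fintype.sum_equiv (A.orderIsoOfFin rfl).toEquiv _ _
      (fun i => congrArg f (A.coe_orderIsoOfFin_apply rfl i).symm)
  have hQ' : ∑ i, ∑ j, c (ts i) * c (ts j) * ∫ ω, X (ts i) ω * X (ts j) ω ∂Pr = 0 := by
    have h1 : ∑ i, ∑ j, c (ts i) * c (ts j) * ∫ ω, X (ts i) ω * X (ts j) ω ∂Pr
        = ∑ i, ∑ s' ∈ A, c (ts i) * c s' * ∫ ω, X (ts i) ω * X s' ω ∂Pr :=
      Finset.sum_congr rfl fun i _ =>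
        hreindex (fun s' => c (ts i) * c s' * ∫ ω, X (ts i) ω * X s' ω ∂Pr)
    rw [h1, hreindex (fun s => ∑ s' ∈ A, c s * c s' * ∫ ω, X s ω * X s' ω ∂Pr), hQ]
  have hcvec : (fun i => c (ts i)) = 0 := by
    by_contra hne
    exact absurd hQ' (ne_of_gt (hK A.card ts htsinj _ hne))
  have hc0 : ∀ s ∈ A, c s = 0 := by
    intro s hs
    rw [← himgts, Finset.mem_image] at hs
    obtain ⟨i, -, rfl⟩ := hs
    exact congrFun hcvec i
  -- Step 5: identify the coefficients
  have hct : ∀ j, c (t j) = β j - ∑ j', if t' j' = t j then β' j' else 0 := by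
    intro j
    simp only [hc]
    congr 1
    simp [ht.injective.eq_iff, Finset.sum_ite_eq']
  have hsubT : ∀ j, ∃ j', t' j' = t j := by
    intro j
    by_contra hno
    push_neg at hno
    have h1 : c (t j) = β j := by
      rw [hct j]
      rw [Finset.sum_eq_zero fun j' _ => if_neg (hno j')]; ring
    exact hβ j (h1 ▸ hc0 _ (htmem j))
  have hct' : ∀ j, c (t' j) = (∑ j', if t j' = t' j then β j' else 0) - β' j := by
    intro j
    simp only [hc]
    congr 1
    simp [ht'.injective.eq_iff, Finset.sum_ite_eq']
  have hsubT' : ∀ j, ∃ j', t j' = t' j := by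
    intro j
    by_contra hno
    push_neg at hno
    have h1 : c (t' j) = -β' j := by
      rw [hct' j, Finset.sum_eq_zero fun j' _ => if_neg (hno j')]; ring
    have := hc0 _ (ht'mem j)
    rw [h1] at this
    exact hβ' j (by linarith)
  have himg : Finset.image t Finset.univ = Finset.image t' Finset.univ := by
    ext s
    simp only [Finset.mem_image, Finset.mem_univ, true_and]
    constructor
    · rintro ⟨j, rfl⟩; exact hsubT j
    · rintro ⟨j, rfl⟩; exact hsubT' j
  have hcard : (Finset.image t Finset.univ).card = p :=
    by rw [Finset.card_image_of_injective _ ht.injective, Finset.card_univ, Fintype.card_fin]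
  have hcard' : (Finset.image t Finset.univ).card = p' :=
    by rw [himg, Finset.card_image_of_injective _ ht'.injective, Finset.card_univ,
      Fintype.card_fin]
  have hpp : p = p' := hcard ▸ hcard'
  subst hpp
  have e1 := Finset.orderEmbOfFin_unique hcard
    (fun x => Finset.mem_image_of_mem _ (Finset.mem_univ x)) ht
  have e2 := Finset.orderEmbOfFin_unique hcard
    (fun x => by rw [himg]; exact Finset.mem_image_of_mem _ (Finset.mem_univ x)) ht'
  have htt : t = t' := e1.trans e2.symm
  refine ⟨rfl, hα, ?_, fun j => by simpa using congrFun htt j⟩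
  intro j
  have h0 := hc0 _ (htmem j)
  rw [hct j] at h0
  have hsum : (∑ j', if t' j' = t j then β' j' else 0) = β' j := by
    rw [← htt]
    simp [ht.injective.eq_iff, Finset.sum_ite_eq']
  simp only [Fin.cast_refl, id_eq]
  linarith
end
end
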